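/- arXiv:2103.00546 — 2 statements merged into one kernel-verified Lean document; each statement's English description precedes it below -/
import Mathlib

section
/- Fix β > 1. Among any n+1 consecutive cylinders of order n (cylinders indexed by consecutive admissible words in lexicographic order), at least one is a full cylinder. -/
open MeasureTheory Set
open scoped Classical

/-- The beta-transformation `T_β x = βx - ⌊βx⌋`. -/
noncomputable def betaT (β x : ℝ) : ℝ := Int.fract (β * x)

/-- The `k`-th digit (0-indexed) of the β-expansion of `x`: `ε_{k+1}(x,β) = ⌊β T_β^k x⌋`. -/
noncomputable def betaDigit (β x : ℝ) (k : ℕ) : ℕ := ⌊β * (betaT β)^[k] x⌋₊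

/-- `Σ_n(β)`: admissible words of length `n`, i.e. prefixes of β-expansions of points of `[0,1)`. -/
def admWords (β : ℝ) (n : ℕ) : Set (Fin n → ℕ) :=
  {w | ∃ x ∈ Set.Ico (0:ℝ) 1, ∀ i : Fin n, w i = betaDigit β x i}

/-- The cylinder `𝔍(w)` of points of `[0,1)` whose β-expansion starts with `w`. -/
def cyl (β : ℝ) {n : ℕ} (w : Fin n → ℕ) : Set ℝ :=
  {x | x ∈ Set.Ico (0:ℝ) 1 ∧ ∀ i : Fin n, betaDigit β x i = w i}

/-- `Ξ_n(β)`: admissible words of length `n` whose cylinder is full (of length `β^{-n}`). -/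
def fullWords (β : ℝ) (n : ℕ) : Set (Fin n → ℕ) :=
  {w | w ∈ admWords β n ∧ volume (cyl β w) = ENNReal.ofReal (1 / β ^ n)}

/-- `ε(β)`: the β-expansion of 1 (0-indexed). -/
noncomputable def eps1 (β : ℝ) (k : ℕ) : ℕ := betaDigit β 1 k

/-- `ε*(β)`: the infinite β-expansion of 1.  If `ε(β)` has a last nonzero digit at
(0-indexed) position `N`, it is the periodic sequence `(ε_0 ⋯ ε_{N-1} (ε_N - 1))^∞`;
otherwise it is `ε(β)` itself. -/

noncomputable def epsStar (β : ℝ) : ℕ → ℕ :=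
  if h : ∃ N, eps1 β N ≠ 0 ∧ ∀ k, N < k → eps1 β k = 0 then
    fun k => if k % (h.choose + 1) = h.choose then eps1 β h.choose - 1
             else eps1 β (k % (h.choose + 1))
  else eps1 β

/-- Strict lexicographic order on sequences of nonnegative integers. -/
def lexLt (a b : ℕ → ℕ) : Prop := ∃ i, (∀ j, j < i → a j = b j) ∧ a i < b i

/-- Strict lexicographic order on words of length `n`. -/
def wordLt {n : ℕ} (a b : Fin n → ℕ) : Prop :=
  ∃ i : Fin n, (∀ j, j < i → a j = b j) ∧ a i < b i

/-- `Ω_n(x)`: all length-`n` prefixes of β-expansions of `x` over all bases `β > 1`. -/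
def prefWords (x : ℝ) (n : ℕ) : Set (Fin n → ℕ) :=
  {w | ∃ β : ℝ, 1 < β ∧ ∀ i : Fin n, w i = betaDigit β x i}

/-- The parameter cylinder `I(w) = {β > 1 : ε_1(x,β)⋯ε_n(x,β) = w}`. -/
def pcyl (x : ℝ) {n : ℕ} (w : Fin n → ℕ) : Set ℝ :=
  {β | 1 < β ∧ ∀ i : Fin n, betaDigit β x i = w i}

/-- `Λ_n(x)`: words whose parameter cylinder is full, i.e. `{T_β^n x : β ∈ I(w)} = [0,1)`. -/
def pfull (x : ℝ) (n : ℕ) : Set (Fin n → ℕ) :=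
  {w | w ∈ prefWords x n ∧ (fun β => (betaT β)^[n] x) '' pcyl x w = Set.Ico (0:ℝ) 1}

/-! Write `⟨w⟩ = ∑ wᵢ β^{-(i+1)}` for the value of a word. The cylinder of an admissible word
`u` whose lexicographic successor is `v` is the interval `[⟨u⟩, ⟨v⟩)`, and `⟨v⟩ - ⟨u⟩ ≤ β^{-n}`,
with equality iff the cylinder is full. If `u < v` first differ at position `j` and
`⟨v⟩ - ⟨u⟩ < β^{-n}`, then `v` vanishes after `j` while `u` does not. Hence along `n` consecutive
non-full cylinders the positions of first difference would strictly decrease inside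
`{0, …, n - 2}`, which is impossible. -/

noncomputable def wordValue (β : ℝ) {n : ℕ} (w : Fin n → ℕ) : ℝ :=
  ∑ i, (w i : ℝ) / β ^ ((i : ℕ) + 1)

noncomputable def digitWord (β x : ℝ) (n : ℕ) : Fin n → ℕ := fun i => betaDigit β x i

section Expansion

variable {β x : ℝ} {n : ℕ}

lemma betaT_mem_Ico (β x : ℝ) : betaT β x ∈ Ico (0 : ℝ) 1 :=
  ⟨Int.fract_nonneg _, Int.fract_lt_one _⟩

lemma iterate_betaT_mem_Ico (β : ℝ) (n : ℕ) (hx : x ∈ Ico (0 : ℝ) 1) :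
    (betaT β)^[n] x ∈ Ico (0 : ℝ) 1 := by
  cases n with
  | zero => exact hx
  | succ n => rw [Function.iterate_succ_apply']; exact betaT_mem_Ico _ _

lemma betaDigit_zero_add_betaT (h : 0 ≤ β * x) : (betaDigit β x 0 : ℝ) + betaT β x = β * x := by
  rw [betaDigit, Function.iterate_zero_apply, betaT, natCast_floor_eq_intCast_floor h,
    Int.floor_add_fract]

lemma betaDigit_succ (β x : ℝ) (k : ℕ) : betaDigit β x (k + 1) = betaDigit β (betaT β x) k := by
  rw [betaDigit, betaDigit, Function.iterate_succ_apply]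

lemma digitWord_succ (β x : ℝ) (n : ℕ) :
    digitWord β x (n + 1) = Fin.cons (betaDigit β x 0) (digitWord β (betaT β x) n) := by
  ext i
  refine Fin.cases rfl (fun i => ?_) i
  simp [digitWord, betaDigit_succ]

lemma wordValue_succ (β : ℝ) (w : Fin (n + 1) → ℕ) :
    wordValue β w = (w 0 + wordValue β (Fin.tail w)) / β := by
  simp only [wordValue, Fin.sum_univ_succ, Fin.val_zero, Fin.val_succ, Fin.tail, add_div,
    Finset.sum_div, div_div, ← pow_succ, zero_add, pow_one]

lemma wordValue_nonneg (hβ : 0 ≤ β) (w : Fin n → ℕ) : 0 ≤ wordValue β w := by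
  unfold wordValue; positivity

lemma one_div_pow_le_wordValue (hβ : 1 ≤ β) {w : Fin n → ℕ} (hw : w ≠ 0) :
    1 / β ^ n ≤ wordValue β w := by
  obtain ⟨i, hi⟩ := Function.ne_iff.1 hw
  have hwi : (1 : ℝ) ≤ w i := by exact_mod_cast Nat.one_le_iff_ne_zero.2 hi
  calc 1 / β ^ n ≤ 1 / β ^ ((i : ℕ) + 1) :=
        one_div_pow_le_one_div_pow_of_le hβ i.isLt
    _ ≤ w i / β ^ ((i : ℕ) + 1) := by gcongr
    _ ≤ wordValue β w :=
        Finset.single_le_sum (f := fun i => (w i : ℝ) / β ^ ((i : ℕ) + 1))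
          (fun j _ => by positivity) (Finset.mem_univ i)

lemma wordValue_digitWord_add_div (hβ : 0 < β) (n : ℕ) (hx : 0 ≤ x) :
    wordValue β (digitWord β x n) + (betaT β)^[n] x / β ^ n = x := by
  induction n generalizing x with
  | zero => simp [wordValue]
  | succ n ih =>
    have hT := ih (betaT_mem_Ico β x).1
    have hx0 := betaDigit_zero_add_betaT (mul_nonneg hβ.le hx)
    rw [wordValue_succ, digitWord_succ, Fin.cons_zero, Fin.tail_cons,
      Function.iterate_succ_apply]
    calc (betaDigit β x 0 + wordValue β (digitWord β (betaT β x) n)) / β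
          + (betaT β)^[n] (betaT β x) / β ^ (n + 1)
        = (betaDigit β x 0 + (wordValue β (digitWord β (betaT β x) n)
          + (betaT β)^[n] (betaT β x) / β ^ n)) / β := by rw [pow_succ]; ring
      _ = x := by rw [hT, hx0]; field_simp

lemma wordValue_digitWord_le (hβ : 0 < β) (n : ℕ) (hx : x ∈ Ico (0 : ℝ) 1) :
    wordValue β (digitWord β x n) ≤ x := by
  have hT := (iterate_betaT_mem_Ico β n hx).1
  linarith [wordValue_digitWord_add_div hβ n hx.1, div_nonneg hT (pow_nonneg hβ.le n)]

lemma mem_cyl_iff {w : Fin n → ℕ} : x ∈ cyl β w ↔ x ∈ Ico (0 : ℝ) 1 ∧ digitWord β x n = w := by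
  simp [cyl, digitWord, funext_iff]

lemma cyl_subset_Ico (hβ : 0 < β) (w : Fin n → ℕ) :
    cyl β w ⊆ Ico (wordValue β w) (wordValue β w + 1 / β ^ n) := by
  intro x hxw
  obtain ⟨hx, rfl⟩ := mem_cyl_iff.1 hxw
  have hexp := wordValue_digitWord_add_div hβ n hx.1
  have hT : (betaT β)^[n] x / β ^ n < 1 / β ^ n := by
    gcongr; exact (iterate_betaT_mem_Ico β n hx).2
  exact ⟨wordValue_digitWord_le hβ n hx, by linarith⟩

lemma tail_mem_admWords {w : Fin (n + 1) → ℕ} (hw : w ∈ admWords β (n + 1)) :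
    Fin.tail w ∈ admWords β n := by
  obtain ⟨x, hx, hxw⟩ := hw
  refine ⟨betaT β x, betaT_mem_Ico β x, fun i => ?_⟩
  rw [Fin.tail, hxw i.succ, Fin.val_succ, betaDigit_succ]

lemma wordValue_lt_one (hβ : 0 < β) {w : Fin n → ℕ} (hw : w ∈ admWords β n) :
    wordValue β w < 1 := by
  obtain ⟨x, hx, hxw⟩ := hw
  have : digitWord β x n = w := funext fun i => (hxw i).symm
  exact this ▸ (wordValue_digitWord_le hβ n hx).trans_lt hx.2

lemma digitWord_wordValue (hβ : 0 < β) {w : Fin n → ℕ} (hw : w ∈ admWords β n) :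
    digitWord β (wordValue β w) n = w := by
  induction n with
  | zero => exact Subsingleton.elim _ _
  | succ n ih =>
    have htail := tail_mem_admWords hw
    have hr : wordValue β (Fin.tail w) ∈ Ico (0 : ℝ) 1 :=
      ⟨wordValue_nonneg hβ.le _, wordValue_lt_one hβ htail⟩
    have hmul : β * wordValue β w = wordValue β (Fin.tail w) + w 0 := by
      rw [wordValue_succ]; field_simp; ring
    have hdigit : betaDigit β (wordValue β w) 0 = w 0 := by
      rw [betaDigit, Function.iterate_zero_apply, hmul, Nat.floor_add_natCast hr.1,
        Nat.floor_eq_zero.2 hr.2, zero_add]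
    have hT : betaT β (wordValue β w) = wordValue β (Fin.tail w) := by
      rw [betaT, hmul, Int.fract_add_natCast, Int.fract_eq_self.2 hr]
    rw [digitWord_succ, hdigit, hT, ih htail, Fin.cons_self_tail]

lemma toLex_le_succ_iff {u v : Fin (n + 1) → ℕ} :
    toLex u ≤ toLex v ↔ u 0 < v 0 ∨ u 0 = v 0 ∧ toLex (Fin.tail u) ≤ toLex (Fin.tail v) := by
  have hlt : toLex u < toLex v ↔
      u 0 < v 0 ∨ u 0 = v 0 ∧ toLex (Fin.tail u) < toLex (Fin.tail v) := by
    rw [← Fin.cons_self_tail u, ← Fin.cons_self_tail v]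
    exact Fin.pi_lex_lt_cons_cons (· < ·)
  have heq : u = v ↔ u 0 = v 0 ∧ Fin.tail u = Fin.tail v := by
    conv_lhs => rw [← Fin.cons_self_tail u, ← Fin.cons_self_tail v]
    exact Fin.cons_inj
  rw [le_iff_lt_or_eq, le_iff_lt_or_eq, toLex_inj, toLex_inj]
  exact (or_congr hlt heq).trans (by tauto)

lemma monotoneOn_digitWord (hβ : 0 ≤ β) (n : ℕ) :
    MonotoneOn (fun x => toLex (digitWord β x n)) (Ici 0) := by
  induction n with
  | zero => exact fun _ _ _ _ _ => (Subsingleton.elim _ _).le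
  | succ n ih =>
    intro x hx y hy hxy
    have hTx := betaDigit_zero_add_betaT (mul_nonneg hβ hx)
    have hTy := betaDigit_zero_add_betaT (mul_nonneg hβ hy)
    have hd : betaDigit β x 0 ≤ betaDigit β y 0 := by
      simp only [betaDigit, Function.iterate_zero_apply]
      exact Nat.floor_le_floor (by gcongr)
    simp only [digitWord_succ, toLex_le_succ_iff, Fin.cons_zero, Fin.tail_cons]
    refine hd.lt_or_eq.imp id fun heq => ⟨heq, ih (betaT_mem_Ico β x).1 (betaT_mem_Ico β y).1 ?_⟩
    rw [heq] at hTx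
    nlinarith

lemma wordLt_iff_toLex_lt {u v : Fin n → ℕ} : wordLt u v ↔ toLex u < toLex v := Iff.rfl

lemma cyl_eq_Ico_of_consecutive (hβ : 0 < β) {u v : Fin n → ℕ} (hu : u ∈ admWords β n)
    (hv : v ∈ admWords β n) (huv : wordLt u v)
    (hcons : ∀ w ∈ admWords β n, ¬(wordLt u w ∧ wordLt w v)) :
    cyl β u = Ico (wordValue β u) (wordValue β v) := by
  rw [wordLt_iff_toLex_lt] at huv
  simp only [wordLt_iff_toLex_lt] at hcons
  have hmono := monotoneOn_digitWord hβ.le n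
  have hu0 := wordValue_nonneg hβ.le u
  ext x
  constructor
  · intro hxu
    obtain ⟨hx, rfl⟩ := mem_cyl_iff.1 hxu
    refine ⟨wordValue_digitWord_le hβ n hx, lt_of_not_ge fun hvx => huv.not_ge ?_⟩
    simpa only [digitWord_wordValue hβ hv] using
      hmono (mem_Ici.2 (wordValue_nonneg hβ.le v)) (mem_Ici.2 hx.1) hvx
  · rintro ⟨hux, hxv⟩
    have hx : x ∈ Ico (0 : ℝ) 1 := ⟨hu0.trans hux, hxv.trans (wordValue_lt_one hβ hv)⟩
    have hle_u : toLex u ≤ toLex (digitWord β x n) := by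
      simpa only [digitWord_wordValue hβ hu] using hmono (mem_Ici.2 hu0) (mem_Ici.2 hx.1) hux
    have hlt_v : toLex (digitWord β x n) < toLex v := by
      refine lt_of_le_of_ne ?_ fun hxv' => ?_
      · simpa only [digitWord_wordValue hβ hv] using
          hmono (mem_Ici.2 hx.1) (mem_Ici.2 (wordValue_nonneg hβ.le v)) hxv.le
      · have := wordValue_digitWord_le hβ n hx
        rw [toLex_inj.1 hxv'] at this
        exact this.not_gt hxv
    refine mem_cyl_iff.2 ⟨hx, (hle_u.lt_or_eq.resolve_left fun hlt => ?_).symm⟩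
    exact hcons _ ⟨x, hx, fun i => rfl⟩ ⟨hlt, hlt_v⟩

lemma wordValue_sub_lt_of_not_mem_fullWords (hβ : 0 < β) {u v : Fin n → ℕ}
    (hu : u ∈ admWords β n) (hv : v ∈ admWords β n) (huv : wordLt u v)
    (hcons : ∀ w ∈ admWords β n, ¬(wordLt u w ∧ wordLt w v)) (hnf : u ∉ fullWords β n) :
    wordValue β v - wordValue β u < 1 / β ^ n := by
  have hcyl := cyl_eq_Ico_of_consecutive hβ hu hv huv hcons
  have hlt : wordValue β u < wordValue β v := by
    have : wordValue β u ∈ cyl β u :=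
      mem_cyl_iff.2 ⟨⟨wordValue_nonneg hβ.le u, wordValue_lt_one hβ hu⟩, digitWord_wordValue hβ hu⟩
    exact (hcyl ▸ this).2
  have hle := ((Ico_subset_Ico_iff hlt).1 (hcyl ▸ cyl_subset_Ico hβ u)).2
  have hne : wordValue β v - wordValue β u ≠ 1 / β ^ n := fun h =>
    hnf ⟨hu, by rw [hcyl, Real.volume_Ico, h]⟩
  exact lt_of_le_of_ne (by linarith) hne

lemma tail_eq_zero_and_tail_ne_zero_of_head_lt (hβ : 1 ≤ β) {u v : Fin (n + 1) → ℕ}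
    (htail : wordValue β (Fin.tail u) < 1) (hhead : u 0 < v 0)
    (hgap : wordValue β v - wordValue β u < 1 / β ^ (n + 1)) :
    Fin.tail v = 0 ∧ Fin.tail u ≠ 0 := by
  have hβ0 : 0 < β := by linarith
  have hhead' : (u 0 : ℝ) + 1 ≤ v 0 := by exact_mod_cast hhead
  rw [wordValue_succ, wordValue_succ, ← sub_div, pow_succ, ← div_div,
    div_lt_div_iff_of_pos_right hβ0] at hgap
  have hpow : 1 / β ^ n ≤ 1 := (div_le_one (by positivity)).2 (one_le_pow₀ hβ)
  have hv : wordValue β (Fin.tail v) < 1 / β ^ n := by linarith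
  refine ⟨by_contra fun h => (one_div_pow_le_wordValue hβ h).not_gt hv, fun h => ?_⟩
  have hu0 : wordValue β (Fin.tail u) = 0 := by simp [h, wordValue]
  linarith [wordValue_nonneg hβ0.le (Fin.tail v)]

lemma eq_zero_after_and_ne_zero_after_of_wordValue_sub_lt (hβ : 1 ≤ β) {u v : Fin n → ℕ}
    (hu : u ∈ admWords β n) {j : Fin n} (hj : ∀ i < j, u i = v i) (hlt : u j < v j)
    (hgap : wordValue β v - wordValue β u < 1 / β ^ n) :
    (∀ i, j < i → v i = 0) ∧ ∃ i, j < i ∧ u i ≠ 0 := by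
  have hβ0 : 0 < β := by linarith
  induction n with
  | zero => exact j.elim0
  | succ n ih =>
    rcases Fin.eq_zero_or_eq_succ j with rfl | ⟨j, rfl⟩
    · obtain ⟨hv, hu'⟩ := tail_eq_zero_and_tail_ne_zero_of_head_lt hβ
        (wordValue_lt_one hβ0 (tail_mem_admWords hu)) hlt hgap
      obtain ⟨i, hi⟩ := Function.ne_iff.1 hu'
      refine ⟨fun i hi => ?_, i.succ, Fin.succ_pos i, hi⟩
      obtain ⟨i, rfl⟩ := Fin.exists_succ_eq.2 hi.ne'
      exact congrFun hv i
    · have h0 : (u 0 : ℝ) = v 0 := by exact_mod_cast hj 0 (Fin.succ_pos j)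
      rw [wordValue_succ, wordValue_succ, h0, ← sub_div, add_sub_add_left_eq_sub, pow_succ,
        ← div_div, div_lt_div_iff_of_pos_right hβ0] at hgap
      obtain ⟨hv, i, hi, hu'⟩ := ih (tail_mem_admWords hu)
        (fun i hi => hj i.succ (Fin.succ_lt_succ_iff.2 hi)) hlt hgap
      refine ⟨fun i hi => ?_, i.succ, Fin.succ_lt_succ_iff.2 hi, hu'⟩
      obtain ⟨i, rfl⟩ := Fin.exists_succ_eq.2 ((Fin.succ_pos j).trans hi).ne'
      exact hv i (Fin.succ_lt_succ_iff.1 hi)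

end Expansion

theorem full_among_consecutive (β : ℝ) (hβ : 1 < β) (n : ℕ) (hn : 1 ≤ n)
    (W : Fin (n + 1) → Fin n → ℕ)
    (hadm : ∀ k, W k ∈ admWords β n)
    (hmono : ∀ k l : Fin (n + 1), k < l → wordLt (W k) (W l))
    (hconsec : ∀ k : Fin n, ∀ v ∈ admWords β n,
        ¬(wordLt (W k.castSucc) v ∧ wordLt v (W k.succ))) :
    ∃ k, W k ∈ fullWords β n := by
  obtain ⟨m, rfl⟩ : ∃ m, n = m + 1 := ⟨n - 1, by omega⟩
  by_contra! hnone
  have hpair (k : Fin (m + 1)) : wordLt (W k.castSucc) (W k.succ) :=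
    hmono _ _ (Fin.castSucc_lt_succ (i := k))
  have hgap k := wordValue_sub_lt_of_not_mem_fullWords (by linarith) (hadm _) (hadm _)
    (hpair k) (hconsec k) (hnone _)
  choose j hj hlt using hpair
  have hdigits k :=
    eq_zero_after_and_ne_zero_after_of_wordValue_sub_lt hβ.le (hadm _) (hj k) (hlt k) (hgap k)
  have hanti : StrictAnti j := Fin.strictAnti_iff_succ_lt.2 fun k => by
    obtain ⟨i, hi, hne⟩ := (hdigits k.succ).2
    rw [← Fin.succ_castSucc] at hne
    exact hi.trans_le (not_lt.1 fun h => hne ((hdigits k.castSucc).1 i h))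
  have hbound k : (j k : ℕ) < m := by
    obtain ⟨i, hi, -⟩ := (hdigits k).2
    have := Fin.lt_def.1 hi
    omega
  have := Fin.le_of_injective (fun k => (⟨j k, hbound k⟩ : Fin m))
    fun k l h => hanti.injective (Fin.ext (Fin.mk.inj h))
  omega
end

section
/- Fix β > 1 and let λ ∈ (0,1) satisfy λ − λ·ln λ < (β−1)²/β³ and λ < 1/β. Then for every integer n ≥ −log_β λ, the full words satisfy #Ξ_n(β) ≥ λ·#Σ_n(β); that is, full cylinders occupy proportion at least λ among all cylinders of order n. -/
open MeasureTheory Set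
open scoped Classical

/-!
Write `S_k(w) = ∑_{i<k} w_i β^{-(i+1)}`. The cylinder of a word `w` of length `n` is the interval
`[S_n(w), min_{k ≤ n} (S_k(w) + β^{-k}))`, and `w` is full exactly when the minimum is attained at
`k = n`. Comparing measures with `[0,1)` gives `β^n ≤ #Σ_n` and `#Ξ_n ≤ β^n`. Appending a zero
keeps a word full, so `#Ξ_n` is monotone; and of two admissible words that differ only in their
last digit, the smaller one is full, so `#Σ_{n+1} ≤ #Σ_n + #Ξ_{n+1}`. Iterating this
`j = ⌈-log_β λ⌉` times gives `#Σ_n ≤ #Σ_{n-j} + j #Ξ_n ≤ β^{n-j+1}/(β-1) + j #Ξ_n`, and the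
hypothesis on `λ` (through `log β ≥ 1 - 1/β` and `λ β^j ≥ 1`) makes
`β^{n-j+1}/(β-1) ≤ (1 - λ j) β^n ≤ (1 - λ j) #Σ_n`.
-/

namespace BetaExpansion

variable {β x : ℝ}

noncomputable def prefixValue (β : ℝ) (v : ℕ → ℕ) (k : ℕ) : ℝ :=
  ∑ i ∈ Finset.range k, v i / β ^ (i + 1)

lemma prefixValue_congr {v v' : ℕ → ℕ} {k : ℕ} (h : ∀ i < k, v i = v' i) :
    prefixValue β v k = prefixValue β v' k :=
  Finset.sum_congr rfl fun i hi => by rw [h i (Finset.mem_range.1 hi)]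

lemma prefixValue_succ (v : ℕ → ℕ) (k : ℕ) :
    prefixValue β v (k + 1) = prefixValue β v k + v k / β ^ (k + 1) :=
  Finset.sum_range_succ _ _

lemma prefixValue_mono (hβ : 0 ≤ β) (v : ℕ → ℕ) : Monotone (prefixValue β v) :=
  monotone_nat_of_le_succ fun k => by
    rw [prefixValue_succ]
    exact le_add_of_nonneg_right (by positivity)

lemma betaT_iterate_mem_Ico (hx : x ∈ Ico (0 : ℝ) 1) (k : ℕ) :
    (betaT β)^[k] x ∈ Ico (0 : ℝ) 1 := by
  cases k with
  | zero => exact hx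
  | succ k =>
    rw [Function.iterate_succ_apply']
    exact ⟨Int.fract_nonneg _, Int.fract_lt_one _⟩

lemma betaT_iterate_succ (hβ : 0 ≤ β) (hx : x ∈ Ico (0 : ℝ) 1) (k : ℕ) :
    (betaT β)^[k + 1] x = β * (betaT β)^[k] x - betaDigit β x k := by
  have hnonneg : 0 ≤ β * (betaT β)^[k] x :=
    mul_nonneg hβ (betaT_iterate_mem_Ico hx k).1
  rw [Function.iterate_succ_apply', betaT, betaDigit,
    natCast_floor_eq_intCast_floor hnonneg, Int.self_sub_floor]

lemma betaT_iterate_eq (hβ : 0 < β) (hx : x ∈ Ico (0 : ℝ) 1) (k : ℕ) :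
    (betaT β)^[k] x = β ^ k * (x - prefixValue β (betaDigit β x) k) := by
  induction k with
  | zero => simp [prefixValue]
  | succ k ih =>
    rw [betaT_iterate_succ hβ.le hx, ih, prefixValue_succ]
    field_simp
    ring

lemma mul_sub_mem_Ico_iff {c s x a : ℝ} (hc : 0 < c) :
    a ≤ c * (x - s) ∧ c * (x - s) < a + 1 ↔ x ∈ Ico (s + a / c) (s + a / c + c⁻¹) := by
  have hleft : s + a / c ≤ x ↔ a ≤ c * (x - s) := by
    rw [← le_sub_iff_add_le', div_le_iff₀ hc, mul_comm]
  have hright : x < s + a / c + c⁻¹ ↔ c * (x - s) < a + 1 := by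
    rw [add_assoc, inv_eq_one_div, ← add_div, ← sub_lt_iff_lt_add', lt_div_iff₀ hc, mul_comm]
  rw [mem_Ico, hleft, hright]

lemma betaDigit_eq_iff (hβ : 0 < β) (hx : x ∈ Ico (0 : ℝ) 1) {v : ℕ → ℕ} {k : ℕ}
    (hv : ∀ i < k, betaDigit β x i = v i) :
    betaDigit β x k = v k ↔
      x ∈ Ico (prefixValue β v (k + 1)) (prefixValue β v (k + 1) + (β ^ (k + 1))⁻¹) := by
  have horbit : β * (betaT β)^[k] x = β ^ (k + 1) * (x - prefixValue β v k) := by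
    rw [betaT_iterate_eq hβ hx, prefixValue_congr hv, pow_succ]
    ring
  have hnonneg : 0 ≤ β * (betaT β)^[k] x :=
    mul_nonneg hβ.le (betaT_iterate_mem_Ico hx k).1
  rw [betaDigit, Nat.floor_eq_iff hnonneg, horbit, prefixValue_succ]
  exact mul_sub_mem_Ico_iff (by positivity)

lemma forall_betaDigit_eq_iff (hβ : 0 < β) (hx : x ∈ Ico (0 : ℝ) 1) (v : ℕ → ℕ) (n : ℕ) :
    (∀ i < n, betaDigit β x i = v i) ↔
      ∀ k ≤ n, x ∈ Ico (prefixValue β v k) (prefixValue β v k + (β ^ k)⁻¹) := by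
  induction n with
  | zero => simpa [prefixValue] using hx
  | succ n ih =>
    simp only [Nat.forall_lt_succ_right, Nat.le_succ_iff, or_imp, forall_and, forall_eq, ih]
    exact and_congr_right fun h => betaDigit_eq_iff hβ hx (ih.2 h)

variable {n : ℕ}

def extendByZero (w : Fin n → ℕ) (i : ℕ) : ℕ := if h : i < n then w ⟨i, h⟩ else 0

lemma extendByZero_of_lt (w : Fin n → ℕ) {i : ℕ} (hi : i < n) : extendByZero w i = w ⟨i, hi⟩ :=
  dif_pos hi

lemma extendByZero_last (w : Fin (n + 1) → ℕ) : extendByZero w n = w (Fin.last n) :=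
  extendByZero_of_lt w n.lt_succ_self

lemma extendByZero_snoc_zero (w : Fin n → ℕ) :
    extendByZero (Fin.snoc w 0 : Fin (n + 1) → ℕ) = extendByZero w := by
  funext i
  rcases lt_trichotomy i n with hi | rfl | hi
  · rw [extendByZero_of_lt _ (by omega), extendByZero_of_lt _ hi]
    exact Fin.snoc_castSucc (α := fun _ => ℕ) 0 w ⟨i, hi⟩
  · rw [extendByZero_last, Fin.snoc_last, extendByZero, dif_neg (lt_irrefl i)]
  · rw [extendByZero, extendByZero, dif_neg (by omega), dif_neg (by omega)]

lemma extendByZero_eq_of_init_eq {w w' : Fin (n + 1) → ℕ} (h : Fin.init w = Fin.init w')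
    {i : ℕ} (hi : i < n) : extendByZero w i = extendByZero w' i := by
  rw [extendByZero_of_lt _ (by omega), extendByZero_of_lt _ (by omega)]
  exact congrFun h ⟨i, hi⟩

noncomputable def cylLeft (β : ℝ) (w : Fin n → ℕ) : ℝ := prefixValue β (extendByZero w) n

noncomputable def cylRight (β : ℝ) (w : Fin n → ℕ) : ℝ :=
  (Finset.range (n + 1)).inf' Finset.nonempty_range_add_one
    fun k => prefixValue β (extendByZero w) k + (β ^ k)⁻¹

lemma cylRight_le (w : Fin n → ℕ) {k : ℕ} (hk : k ≤ n) :
    cylRight β w ≤ prefixValue β (extendByZero w) k + (β ^ k)⁻¹ :=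
  Finset.inf'_le _ (Finset.mem_range_succ_iff.2 hk)

lemma mem_cyl_iff (hβ : 0 < β) (w : Fin n → ℕ) :
    x ∈ cyl β w ↔ ∀ k ≤ n,
      x ∈ Ico (prefixValue β (extendByZero w) k) (prefixValue β (extendByZero w) k + (β ^ k)⁻¹) := by
  constructor
  · rintro ⟨hx, hdigits⟩
    refine (forall_betaDigit_eq_iff hβ hx _ n).1 fun i hi => ?_
    rw [hdigits ⟨i, hi⟩, extendByZero_of_lt w hi]
  · intro h
    have hx : x ∈ Ico (0 : ℝ) 1 := by simpa [prefixValue] using h 0 n.zero_le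
    refine ⟨hx, fun i => ?_⟩
    rw [(forall_betaDigit_eq_iff hβ hx _ n).2 h i i.isLt, extendByZero_of_lt w i.isLt]

lemma cyl_eq_Ico (hβ : 0 < β) (w : Fin n → ℕ) : cyl β w = Ico (cylLeft β w) (cylRight β w) := by
  ext x
  rw [mem_cyl_iff hβ, mem_Ico, cylRight, Finset.lt_inf'_iff]
  simp only [Finset.mem_range_succ_iff, mem_Ico]
  constructor
  · intro h
    exact ⟨(h n le_rfl).1, fun k hk => (h k hk).2⟩
  · rintro ⟨hleft, hright⟩ k hk
    exact ⟨(prefixValue_mono hβ.le _ hk).trans hleft, hright k hk⟩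

lemma mem_admWords_iff (hβ : 0 < β) (w : Fin n → ℕ) :
    w ∈ admWords β n ↔ cylLeft β w < cylRight β w := by
  rw [← nonempty_Ico, ← cyl_eq_Ico hβ]
  exact ⟨fun ⟨x, hx, hdigits⟩ => ⟨x, hx, fun i => (hdigits i).symm⟩,
    fun ⟨x, hx, hdigits⟩ => ⟨x, hx, fun i => (hdigits i).symm⟩⟩

lemma volume_cyl_le (hβ : 0 < β) (w : Fin n → ℕ) :
    volume (cyl β w) ≤ ENNReal.ofReal (β ^ n)⁻¹ := by
  have hright := cylRight_le (β := β) w le_rfl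
  rw [cyl_eq_Ico hβ, Real.volume_Ico, cylLeft]
  exact ENNReal.ofReal_le_ofReal (by linarith)

lemma mem_fullWords_iff (hβ : 0 < β) (w : Fin n → ℕ) :
    w ∈ fullWords β n ↔
      ∀ k ≤ n, cylLeft β w + (β ^ n)⁻¹ ≤ prefixValue β (extendByZero w) k + (β ^ k)⁻¹ := by
  have hright : cylRight β w ≤ cylLeft β w + (β ^ n)⁻¹ := cylRight_le w le_rfl
  have hpos : 0 < (β ^ n)⁻¹ := by positivity
  have hfull : w ∈ fullWords β n ↔ cylLeft β w + (β ^ n)⁻¹ ≤ cylRight β w := by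
    rw [fullWords, mem_ofPred_eq, mem_admWords_iff hβ, cyl_eq_Ico hβ, Real.volume_Ico, one_div]
    constructor
    · rintro ⟨hlt, hvol⟩
      rw [ENNReal.ofReal_eq_ofReal_iff (by linarith) hpos.le] at hvol
      linarith
    · intro h
      exact ⟨by linarith, congrArg ENNReal.ofReal (by linarith)⟩
  rw [hfull, cylRight, Finset.le_inf'_iff]
  simp only [Finset.mem_range_succ_iff]

lemma admWords_finite (hβ : 0 ≤ β) (n : ℕ) : (admWords β n).Finite := by
  refine (Set.Finite.pi fun _ => Set.finite_Iic ⌊β⌋₊).subset ?_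
  rintro w ⟨x, hx, hdigits⟩ i -
  rw [mem_Iic, hdigits i, betaDigit]
  have hT := betaT_iterate_mem_Ico (β := β) hx i
  exact Nat.floor_le_floor (mul_le_of_le_one_right hβ hT.2.le)

lemma fullWords_subset_admWords : fullWords β n ⊆ admWords β n := fun _ hw => hw.1

lemma fullWords_finite (hβ : 0 ≤ β) (n : ℕ) : (fullWords β n).Finite :=
  (admWords_finite hβ n).subset fullWords_subset_admWords

lemma pow_le_ncard_admWords (hβ : 0 < β) (n : ℕ) : β ^ n ≤ (admWords β n).ncard := by
  set F := (admWords_finite hβ.le n).toFinset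
  have hcover : Ico (0 : ℝ) 1 ⊆ ⋃ w ∈ F, cyl β w := fun x hx =>
    mem_biUnion ((admWords_finite hβ.le n).mem_toFinset.2 ⟨x, hx, fun _ => rfl⟩) ⟨hx, fun _ => rfl⟩
  have hvol : 1 ≤ ENNReal.ofReal (F.card * (β ^ n)⁻¹) := calc
    1 = volume (Ico (0 : ℝ) 1) := by simp
    _ ≤ volume (⋃ w ∈ F, cyl β w) := measure_mono hcover
    _ ≤ ∑ w ∈ F, volume (cyl β w) := measure_biUnion_finset_le F _
    _ ≤ ∑ _w ∈ F, ENNReal.ofReal (β ^ n)⁻¹ := Finset.sum_le_sum fun w _ => volume_cyl_le hβ w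
    _ = ENNReal.ofReal (F.card * (β ^ n)⁻¹) := by
      rw [Finset.sum_const, nsmul_eq_mul, ENNReal.ofReal_mul (by positivity), ENNReal.ofReal_natCast]
  rw [ENNReal.one_le_ofReal, ← div_eq_mul_inv, one_le_div (by positivity)] at hvol
  rwa [Set.ncard_eq_toFinset_card _ (admWords_finite hβ.le n)]

lemma ncard_fullWords_le_pow (hβ : 0 < β) (n : ℕ) : (fullWords β n).ncard ≤ β ^ n := by
  set G := (fullWords_finite hβ.le n).toFinset
  have hdisj : (G : Set (Fin n → ℕ)).PairwiseDisjoint (cyl β) := fun w _ w' _ hne =>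
    Set.disjoint_left.2 fun x hx hx' => hne (funext fun i => (hx.2 i).symm.trans (hx'.2 i))
  have hvol : ENNReal.ofReal (G.card * (β ^ n)⁻¹) ≤ 1 := calc
    ENNReal.ofReal (G.card * (β ^ n)⁻¹) = ∑ w ∈ G, volume (cyl β w) := by
      rw [Finset.sum_congr rfl fun w hw => ((fullWords_finite hβ.le n).mem_toFinset.1 hw).2,
        Finset.sum_const, nsmul_eq_mul, ENNReal.ofReal_mul (by positivity), ENNReal.ofReal_natCast,
        one_div]
    _ = volume (⋃ w ∈ G, cyl β w) :=
      (measure_biUnion_finset hdisj fun w _ => cyl_eq_Ico hβ w ▸ measurableSet_Ico).symm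
    _ ≤ volume (Ico (0 : ℝ) 1) := measure_mono (iUnion₂_subset fun w _ _ hx => hx.1)
    _ = 1 := by simp
  rw [ENNReal.ofReal_le_one, ← div_eq_mul_inv, div_le_one (by positivity)] at hvol
  rwa [Set.ncard_eq_toFinset_card _ (fullWords_finite hβ.le n)]

lemma snoc_zero_mem_fullWords (hβ : 1 ≤ β) {w : Fin n → ℕ} (hw : w ∈ fullWords β n) :
    (Fin.snoc w 0 : Fin (n + 1) → ℕ) ∈ fullWords β (n + 1) := by
  have hβ0 : 0 < β := by linarith
  rw [mem_fullWords_iff hβ0] at hw ⊢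
  have hleft : cylLeft β (Fin.snoc w 0 : Fin (n + 1) → ℕ) = cylLeft β w := by
    rw [cylLeft, cylLeft, extendByZero_snoc_zero, prefixValue_succ, extendByZero,
      dif_neg (lt_irrefl n), Nat.cast_zero, zero_div, add_zero]
  rw [hleft, extendByZero_snoc_zero]
  intro k hk
  rcases Nat.le_succ_iff.1 hk with hk | rfl
  · calc cylLeft β w + (β ^ (n + 1))⁻¹
        ≤ cylLeft β w + (β ^ n)⁻¹ := by gcongr; omega
      _ ≤ _ := hw k hk
  · rw [← hleft, cylLeft, extendByZero_snoc_zero]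

lemma ncard_fullWords_mono (hβ : 1 ≤ β) : Monotone fun n => (fullWords β n).ncard :=
  monotone_nat_of_le_succ fun n =>
    Set.ncard_le_ncard_of_injOn (fun w => Fin.snoc w 0) (fun _ hw => snoc_zero_mem_fullWords hβ hw)
      (fun w _ w' _ h => by simpa only [Fin.init_snoc] using congrArg Fin.init h)
      (fullWords_finite (by linarith) (n + 1))

lemma init_mem_admWords {w : Fin (n + 1) → ℕ} (hw : w ∈ admWords β (n + 1)) :
    Fin.init w ∈ admWords β n := by
  obtain ⟨x, hx, hdigits⟩ := hw
  exact ⟨x, hx, fun i => hdigits i.castSucc⟩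

lemma mem_fullWords_of_init_eq_of_lt (hβ : 0 < β) {w w' : Fin (n + 1) → ℕ}
    (hw' : w' ∈ admWords β (n + 1)) (hinit : Fin.init w = Fin.init w')
    (hlt : w (Fin.last n) < w' (Fin.last n)) : w ∈ fullWords β (n + 1) := by
  rw [mem_admWords_iff hβ] at hw'
  rw [mem_fullWords_iff hβ]
  have hprefix : ∀ k ≤ n, prefixValue β (extendByZero w) k = prefixValue β (extendByZero w') k :=
    fun k hk => prefixValue_congr fun i hi => extendByZero_eq_of_init_eq hinit (by omega)
  have hleft : cylLeft β w + (β ^ (n + 1))⁻¹ ≤ cylLeft β w' := by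
    have hdigit : (w (Fin.last n) + 1 : ℝ) ≤ w' (Fin.last n) := by exact_mod_cast hlt
    rw [cylLeft, cylLeft, prefixValue_succ, prefixValue_succ, hprefix n le_rfl, extendByZero_last,
      extendByZero_last, add_assoc, inv_eq_one_div, ← add_div]
    gcongr
  intro k hk
  rcases Nat.le_succ_iff.1 hk with hk | rfl
  · calc cylLeft β w + (β ^ (n + 1))⁻¹
        ≤ cylRight β w' := hleft.trans hw'.le
      _ ≤ prefixValue β (extendByZero w') k + (β ^ k)⁻¹ := cylRight_le w' (by omega)
      _ = prefixValue β (extendByZero w) k + (β ^ k)⁻¹ := by rw [hprefix k hk]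
  · rfl

lemma ncard_admWords_succ_le (hβ : 0 < β) (n : ℕ) :
    (admWords β (n + 1)).ncard ≤ (admWords β n).ncard + (fullWords β (n + 1)).ncard := by
  rw [← Set.ncard_sdiff_add_ncard_of_subset fullWords_subset_admWords (admWords_finite hβ.le _)]
  refine Nat.add_le_add_right (Set.ncard_le_ncard_of_injOn Fin.init
    (fun w hw => init_mem_admWords hw.1) ?_ (admWords_finite hβ.le n)) _
  rintro w ⟨hw, hw_notFull⟩ w' ⟨hw', hw'_notFull⟩ hinit
  rcases lt_trichotomy (w (Fin.last n)) (w' (Fin.last n)) with hlt | hlast | hgt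
  · exact absurd (mem_fullWords_of_init_eq_of_lt hβ hw' hinit hlt) hw_notFull
  · rw [← Fin.snoc_init_self w, ← Fin.snoc_init_self w', hinit, hlast]
  · exact absurd (mem_fullWords_of_init_eq_of_lt hβ hw hinit.symm hgt) hw'_notFull

lemma ncard_admWords_add_le (hβ : 1 ≤ β) (m j : ℕ) :
    (admWords β (m + j)).ncard ≤ (admWords β m).ncard + j * (fullWords β (m + j)).ncard := by
  induction j with
  | zero => simp
  | succ j ih =>
    have hstep := ncard_admWords_succ_le (by linarith) (m + j)
    have hmono := ncard_fullWords_mono hβ (m + j).le_succ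
    rw [← add_assoc]
    nlinarith

lemma ncard_admWords_le (hβ : 1 < β) (n : ℕ) : (admWords β n).ncard ≤ β ^ (n + 1) / (β - 1) := by
  have hβ1 : 0 < β - 1 := by linarith
  induction n with
  | zero =>
    have hone : ((admWords β 0).ncard : ℝ) ≤ 1 := by
      exact_mod_cast Set.ncard_le_one_of_subsingleton _
    rw [zero_add, pow_one, le_div_iff₀ hβ1]
    nlinarith
  | succ n ih =>
    have hstep : ((admWords β (n + 1)).ncard : ℝ) ≤
        (admWords β n).ncard + (fullWords β (n + 1)).ncard := by
      exact_mod_cast ncard_admWords_succ_le (by linarith) n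
    calc ((admWords β (n + 1)).ncard : ℝ)
        ≤ β ^ (n + 1) / (β - 1) + β ^ (n + 1) := by
          linarith [ncard_fullWords_le_pow (β := β) (by linarith) (n + 1)]
      _ = β ^ (n + 1 + 1) / (β - 1) := by
          field_simp
          ring

lemma lam_mul_add_le_one (hβ : 1 < β) {lam : ℝ} (hlam : lam ∈ Ioo (0 : ℝ) 1)
    (h1 : lam - lam * Real.log lam < (β - 1) ^ 2 / β ^ 3) {j : ℕ}
    (hj : -Real.logb β lam ≤ j) (hj' : (j : ℝ) < -Real.logb β lam + 1) :
    lam * j + β / ((β - 1) * β ^ j) ≤ 1 := by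
  obtain ⟨hlam0, hlam1⟩ := hlam
  have hβ1 : 0 < β - 1 := by linarith
  have hlog : Real.log lam < 0 := Real.log_neg hlam0 hlam1
  have hlogβ : 0 < Real.log β := Real.log_pos hβ
  have hpow : (β ^ j)⁻¹ ≤ lam := by
    rw [← Real.logb_inv, Real.logb_le_iff_le_rpow hβ (inv_pos.2 hlam0), Real.rpow_natCast] at hj
    exact inv_le_of_inv_le₀ hlam0 hj
  have hinvlog : 1 / Real.log β ≤ β / (β - 1) := by
    have h := Real.one_sub_inv_le_log_of_pos (by linarith : 0 < β)
    have hβinv : β * (1 - β⁻¹) = β - 1 := by field_simp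
    rw [div_le_div_iff₀ hlogβ hβ1]
    nlinarith
  have hlamL : lam * -Real.logb β lam ≤ -(lam * Real.log lam) * (β / (β - 1)) := by
    rw [Real.logb, show lam * -(Real.log lam / Real.log β) = -(lam * Real.log lam) * (1 / Real.log β)
      by ring]
    exact mul_le_mul_of_nonneg_left hinvlog (by nlinarith)
  have hlam_small : lam < (β - 1) ^ 2 / β ^ 3 := by nlinarith
  have hsum : (β - 1) / β ^ 2 + (β - 1) ^ 2 / β ^ 3 ≤ 1 := by
    rw [show (β - 1) / β ^ 2 + (β - 1) ^ 2 / β ^ 3 = ((β - 1) * β + (β - 1) ^ 2) / β ^ 3 by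
      field_simp, div_le_one (by positivity)]
    nlinarith [mul_nonneg (by linarith : 0 ≤ β) (sq_nonneg (β - 1))]
  calc lam * j + β / ((β - 1) * β ^ j)
      ≤ lam * (-Real.logb β lam + 1) + β / (β - 1) * lam := by
        rw [← div_div, div_eq_mul_inv (β / (β - 1))]
        gcongr
    _ ≤ (lam - lam * Real.log lam) * (β / (β - 1)) + lam := by linarith
    _ ≤ (β - 1) ^ 2 / β ^ 3 * (β / (β - 1)) + lam := by gcongr
    _ = (β - 1) / β ^ 2 + lam := by field_simp
    _ ≤ 1 := by linarith

end BetaExpansion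

theorem fullWords_proportion_general (β : ℝ) (hβ : 1 < β) (lam : ℝ)
    (hlam : lam ∈ Set.Ioo (0:ℝ) 1)
    (h1 : lam - lam * Real.log lam < (β - 1) ^ 2 / β ^ 3)
    (n : ℕ) (hn : -Real.logb β lam ≤ (n : ℝ)) :
    lam * ((admWords β n).ncard : ℝ) ≤ ((fullWords β n).ncard : ℝ) := by
  have hL : 0 < -Real.logb β lam := neg_pos.2 (Real.logb_neg hβ hlam.1 hlam.2)
  set j := ⌈-Real.logb β lam⌉₊
  have hj : 0 < j := Nat.ceil_pos.2 hL
  obtain ⟨m, rfl⟩ : ∃ m, n = m + j := ⟨n - j, by have := Nat.ceil_le.2 hn; omega⟩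
  have hβ1 : 0 < β - 1 := by linarith
  have hkey := BetaExpansion.lam_mul_add_le_one hβ hlam h1 (Nat.le_ceil _)
    (Nat.ceil_lt_add_one hL.le)
  have hcoef : 0 ≤ 1 - lam * j := by linarith [show 0 ≤ β / ((β - 1) * β ^ j) by positivity]
  have hsplit : ((admWords β (m + j)).ncard : ℝ) ≤
      (admWords β m).ncard + j * (fullWords β (m + j)).ncard := by
    exact_mod_cast BetaExpansion.ncard_admWords_add_le hβ.le m j
  have hshort : ((admWords β m).ncard : ℝ) ≤ (1 - lam * j) * (admWords β (m + j)).ncard := calc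
    _ ≤ β ^ (m + 1) / (β - 1) := BetaExpansion.ncard_admWords_le hβ m
    _ = β ^ (m + j) * (β / ((β - 1) * β ^ j)) := by field_simp; ring
    _ ≤ (1 - lam * j) * β ^ (m + j) := by rw [mul_comm]; gcongr; linarith
    _ ≤ (1 - lam * j) * (admWords β (m + j)).ncard := by
      gcongr
      exact BetaExpansion.pow_le_ncard_admWords (by linarith) _
  have hmul : (j : ℝ) * (lam * (admWords β (m + j)).ncard) ≤ j * (fullWords β (m + j)).ncard := by
    linarith
  exact le_of_mul_le_mul_left hmul (by exact_mod_cast hj)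

theorem fullWords_proportion (β : ℝ) (hβ : 1 < β) (lam : ℝ)
    (hlam : lam ∈ Set.Ioo (0:ℝ) 1)
    (h1 : lam - lam * Real.log lam < (β - 1) ^ 2 / β ^ 3) (h2 : lam < 1 / β)
    (n : ℕ) (hn : -Real.logb β lam ≤ (n : ℝ)) :
    lam * ((admWords β n).ncard : ℝ) ≤ ((fullWords β n).ncard : ℝ) :=
  fullWords_proportion_general β hβ lam hlam h1 n hn
end
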